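/- arXiv:1412.5849 — 2 statements merged into one kernel-verified Lean document; each statement's English description precedes it below -/
import Mathlib

section
/- If G is a finite group with exactly 2 maximal involutions, then the rainbow connection number of the power graph Γ_G equals 3. -/
/-- The power graph of a group `G`: distinct elements `x` and `y` are adjacent
iff one is a power of the other. -/
def powerGraph (G : Type*) [Group G] : SimpleGraph G where
  Adj x y := x ≠ y ∧ (x ∈ Subgroup.zpowers y ∨ y ∈ Subgroup.zpowers x)
  symm := ⟨fun x y h => ⟨h.1.symm, h.2.symm⟩⟩
  loopless := ⟨fun x h => h.1 rfl⟩

/-- `ζ` is a rainbow `k`-coloring of `Γ`: every pair of vertices is joined by a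
path whose edges receive pairwise distinct colors. -/
def IsRainbowColoring {V : Type*} (Γ : SimpleGraph V) {k : ℕ} (ζ : Sym2 V → Fin k) : Prop :=
  ∀ u v : V, ∃ p : Γ.Walk u v, p.IsPath ∧ (p.edges.map ζ).Nodup

/-- The rainbow connection number of `Γ`: the least `k` admitting a rainbow
`k`-coloring. -/
noncomputable def rainbowConnection {V : Type*} (Γ : SimpleGraph V) : ℕ :=
  sInf {k : ℕ | ∃ ζ : Sym2 V → Fin k, IsRainbowColoring Γ ζ}

/-- An element `x` is a maximal involution if it has order 2 and the only
cyclic subgroup containing `x` is `⟨x⟩`. -/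
def IsMaximalInvolution {G : Type*} [Group G] (x : G) : Prop :=
  orderOf x = 2 ∧ ∀ g : G, x ∈ Subgroup.zpowers g → Subgroup.zpowers g = Subgroup.zpowers x


/-!
A maximal involution `x` is adjacent only to `1` in the power graph. With two of them, `x₁` and
`x₂`, and the vertex `x₁ x₂`, which is neither of them nor `1`, a colouring with at most two
colours would have to join each pair of these three vertices by a rainbow path through `1`,
forcing the three edges at `1` to have pairwise distinct colours.

For three colours, give every edge at `1` the colour of its other end under a vertex
2-colouring that separates each `v ≠ v⁻¹` from `v⁻¹` and `x₁` from `x₂`, and all other edges the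
third colour. A non-maximal involution `v` lies in some `⟨y⟩` with `y ≠ y⁻¹`, so every vertex
other than `1, x₁, x₂` has a neighbour `w ≠ 1` of the other colour; nonadjacent vertices
`u, v` are then joined by `u - 1 - v` or `u - 1 - w - v`.
-/

open SimpleGraph Subgroup

section RainbowColoring

variable {V : Type*} {Γ : SimpleGraph V}

lemma rainbowConnection_eq_of_forall_le {n : ℕ}
    (hex : ∃ ζ : Sym2 V → Fin n, IsRainbowColoring Γ ζ)
    (hle : ∀ (k : ℕ) (ζ : Sym2 V → Fin k), IsRainbowColoring Γ ζ → n ≤ k) :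
    rainbowConnection Γ = n :=
  le_antisymm (Nat.sInf_le hex) (le_csInf ⟨n, hex⟩ fun k ⟨ζ, hζ⟩ => hle k ζ hζ)

lemma SimpleGraph.Walk.length_le_of_nodup_map_edges {α : Type*} [Fintype α] {f : Sym2 V → α}
    {u v : V} (p : Γ.Walk u v) (hp : (p.edges.map f).Nodup) : p.length ≤ Fintype.card α := by
  simpa using hp.length_le_card

variable {k : ℕ} {ζ : Sym2 V → Fin k}

/-- With at most two colours a rainbow path has length at most two, so the one from `x` to `t`
is `x - c - t`. -/
lemma IsRainbowColoring.color_ne_of_forall_adj_eq (hζ : IsRainbowColoring Γ ζ) (hk : k ≤ 2)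
    {x c t : V} (hx : ∀ w, Γ.Adj x w → w = c) (htx : t ≠ x) (htc : t ≠ c) :
    ζ s(x, c) ≠ ζ s(c, t) := by
  obtain ⟨p, -, hp⟩ := hζ x t
  have hlen := p.length_le_of_nodup_map_edges hp
  match p with
  | .nil => exact absurd rfl htx
  | .cons hxw .nil => exact absurd (hx _ hxw) htc
  | .cons hxw (.cons _ .nil) =>
    obtain rfl := hx _ hxw
    simpa using hp
  | .cons _ (.cons _ (.cons _ _)) => simp at hlen; omega

lemma IsRainbowColoring.three_le (hζ : IsRainbowColoring Γ ζ) {c x y z : V}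
    (hx : ∀ w, Γ.Adj x w → w = c) (hy : ∀ w, Γ.Adj y w → w = c) (hxy : x ≠ y) (hyc : y ≠ c)
    (hzx : z ≠ x) (hzy : z ≠ y) (hzc : z ≠ c) : 3 ≤ k := by
  by_contra! hk
  have hxy := hζ.color_ne_of_forall_adj_eq (by omega) hx hxy.symm hyc
  have hxz := hζ.color_ne_of_forall_adj_eq (by omega) hx hzx hzc
  have hyz := hζ.color_ne_of_forall_adj_eq (by omega) hy hzy hzc
  rw [show s(c, y) = s(y, c) from Sym2.eq_swap] at hxy
  have := Fin.val_ne_of_ne hxy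
  have := Fin.val_ne_of_ne hxz
  have := Fin.val_ne_of_ne hyz
  omega

def starEdgeColoring [DecidableEq V] (c : V) (g : V → Fin 2) : Sym2 V → Fin 3 :=
  Sym2.lift ⟨fun u v => if u = c then (g v).castSucc else if v = c then (g u).castSucc
    else Fin.last 2, fun u v => by by_cases hu : u = c <;> by_cases hv : v = c <;> simp [hu, hv]⟩

section starEdgeColoring

variable [DecidableEq V] {c : V} {g : V → Fin 2}

lemma starEdgeColoring_center_left (v : V) : starEdgeColoring c g s(c, v) = (g v).castSucc := by
  simp [starEdgeColoring]

lemma starEdgeColoring_center_right (u : V) : starEdgeColoring c g s(u, c) = (g u).castSucc := by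
  by_cases hu : u = c <;> simp [starEdgeColoring, hu]

lemma starEdgeColoring_of_ne {u v : V} (hu : u ≠ c) (hv : v ≠ c) :
    starEdgeColoring c g s(u, v) = Fin.last 2 := by
  simp [starEdgeColoring, hu, hv]

end starEdgeColoring

/-- Nonadjacent `u, v` are joined by `u - c - v` when `g u ≠ g v`, and otherwise by
`u - c - w - v` for a neighbour `w` of whichever of them lies outside `B`. -/
theorem exists_isRainbowColoring_fin_three {c : V} (hc : ∀ v, v ≠ c → Γ.Adj c v)
    (g : V → Fin 2) (B : Set V) (hB : B.InjOn g)
    (hgood : ∀ v, v ≠ c → v ∉ B → ∃ w, w ≠ c ∧ Γ.Adj v w ∧ g w ≠ g v) :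
    ∃ ζ : Sym2 V → Fin 3, IsRainbowColoring Γ ζ := by
  classical
  refine ⟨starEdgeColoring c g, fun u v => ?_⟩
  by_cases huv : u = v
  · subst huv
    exact ⟨.nil, .nil, by simp⟩
  by_cases hadj : Γ.Adj u v
  · exact ⟨hadj.toWalk, hadj.isPath_toWalk, by simp⟩
  have hu : u ≠ c := by rintro rfl; exact hadj (hc v (Ne.symm huv))
  have hv : v ≠ c := by rintro rfl; exact hadj (hc u huv).symm
  by_cases hguv : g u ≠ g v
  · refine ⟨.cons (hc u hu).symm (.cons (hc v hv) .nil), ?_, ?_⟩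
    · simp [Walk.cons_isPath_iff, hu, huv, hv.symm]
    · simp [starEdgeColoring_center_left, starEdgeColoring_center_right, hguv]
  wlog hvB : v ∉ B generalizing u v
  · have huB : u ∉ B := fun huB => huv (hB huB (not_not.mp hvB) (not_not.mp hguv))
    obtain ⟨p, hp, hpζ⟩ := this v u (Ne.symm huv) (fun h => hadj h.symm) hv hu
      (fun h => hguv (Ne.symm h)) huB
    exact ⟨p.reverse, hp.reverse, by simpa using hpζ⟩
  obtain ⟨w, hw, hvw, hgw⟩ := hgood v hv hvB
  have huw : u ≠ w := by rintro rfl; exact hadj hvw.symm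
  refine ⟨.cons (hc u hu).symm (.cons (hc w hw) (.cons hvw.symm .nil)), ?_, ?_⟩
  · simp [Walk.cons_isPath_iff, hu, huv, huw, hv.symm, hw.symm, hvw.ne']
  · simp [starEdgeColoring_center_left, starEdgeColoring_center_right,
      starEdgeColoring_of_ne hw hv, Fin.ext_iff]
    omega

end RainbowColoring

section PowerGraph

variable {G : Type*} [Group G]

lemma eq_one_or_eq_of_mem_zpowers_of_orderOf_eq_two {x y : G} (hx : orderOf x = 2)
    (hy : y ∈ zpowers x) : y = 1 ∨ y = x := by
  classical
  have hfin : IsOfFinOrder x := orderOf_pos_iff.mp (by omega)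
  simp [hfin.mem_zpowers_iff_mem_range_orderOf, hx, Finset.range_add_one] at hy
  exact hy.symm

lemma orderOf_eq_two_of_eq_inv {v : G} (hvv : v = v⁻¹) (hv : v ≠ 1) : orderOf v = 2 :=
  orderOf_eq_prime (by rw [sq, mul_eq_one_iff_eq_inv]; exact hvv) hv

lemma powerGraph_adj_one_left {v : G} (hv : v ≠ 1) : (powerGraph G).Adj 1 v :=
  ⟨hv.symm, Or.inl (one_mem _)⟩

lemma powerGraph_adj_of_mem_zpowers {x y : G} (hxy : x ≠ y) (h : x ∈ zpowers y) :
    (powerGraph G).Adj x y :=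
  ⟨hxy, Or.inl h⟩

lemma powerGraph_adj_inv {x : G} (hx : x ≠ x⁻¹) : (powerGraph G).Adj x x⁻¹ :=
  ⟨hx, Or.inr (inv_mem (mem_zpowers x))⟩

lemma IsMaximalInvolution.eq_one_of_adj {x w : G} (hx : IsMaximalInvolution x)
    (h : (powerGraph G).Adj x w) : w = 1 := by
  obtain ⟨hxw, hmem | hmem⟩ := h
  · have hw : w ∈ zpowers x := hx.2 w hmem ▸ mem_zpowers w
    exact (eq_one_or_eq_of_mem_zpowers_of_orderOf_eq_two hx.1 hw).resolve_right hxw.symm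
  · exact (eq_one_or_eq_of_mem_zpowers_of_orderOf_eq_two hx.1 hmem).resolve_right hxw.symm

lemma exists_mem_zpowers_ne_inv_of_not_isMaximalInvolution {v : G} (hv : orderOf v = 2)
    (hmax : ¬IsMaximalInvolution v) : ∃ y, v ∈ zpowers y ∧ y ≠ y⁻¹ := by
  obtain ⟨y, hvy, hne⟩ : ∃ y, v ∈ zpowers y ∧ zpowers y ≠ zpowers v := by
    simpa [IsMaximalInvolution, hv] using hmax
  refine ⟨y, hvy, fun hy => ?_⟩
  have hy1 : y ≠ 1 := by
    rintro rfl
    rw [zpowers_one_eq_bot, mem_bot] at hvy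
    simp [hvy] at hv
  obtain rfl | rfl :=
    eq_one_or_eq_of_mem_zpowers_of_orderOf_eq_two (orderOf_eq_two_of_eq_inv hy hy1) hvy
  · simp at hv
  · exact hne rfl

lemma three_le_of_isRainbowColoring_powerGraph {x₁ x₂ : G} (hx₁ : IsMaximalInvolution x₁)
    (hx₂ : IsMaximalInvolution x₂) (hne : x₁ ≠ x₂) {k : ℕ} {ζ : Sym2 G → Fin k}
    (hζ : IsRainbowColoring (powerGraph G) ζ) : 3 ≤ k := by
  have hmul := mul_notMem_of_orderOf_eq_two hx₁.1 hx₂.1 hne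
  simp only [Set.mem_insert_iff, Set.mem_singleton_iff, not_or] at hmul
  exact hζ.three_le (fun _ => hx₁.eq_one_of_adj) (fun _ => hx₂.eq_one_of_adj) hne
    (fun h => by simpa [h] using hx₂.1) hmul.1 hmul.2.1 hmul.2.2

/-- The order only serves to pick one element of each pair `{v, v⁻¹}`. -/
def inverseSeparatingColoring [LinearOrder G] (x : G) (v : G) : Fin 2 :=
  if v = x ∨ v < v⁻¹ then 0 else 1

section inverseSeparatingColoring

variable [LinearOrder G] {x : G}

lemma inverseSeparatingColoring_inv_ne (hx : x⁻¹ = x) {v : G} (hv : v ≠ v⁻¹) (hvx : v ≠ x) :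
    inverseSeparatingColoring x v⁻¹ ≠ inverseSeparatingColoring x v := by
  have hvx' : v⁻¹ ≠ x := fun h => hvx (by rw [← inv_inv v, h, hx])
  rcases hv.lt_or_gt with h | h <;>
    simp [inverseSeparatingColoring, hvx, hvx', h, h.not_gt]

lemma inverseSeparatingColoring_injOn (hx : x⁻¹ = x) {y : G}
    (hy : ∀ z, IsMaximalInvolution z → z = x ∨ z = y) :
    {z : G | IsMaximalInvolution z}.InjOn (inverseSeparatingColoring x) := by
  have hcol : ∀ z, IsMaximalInvolution z → (inverseSeparatingColoring x z = 0 ↔ z = x) := by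
    intro z hz
    simp [inverseSeparatingColoring, inv_eq_self_of_orderOf_eq_two hz.1]
  intro z₁ hz₁ z₂ hz₂ h
  have key : z₁ = x ↔ z₂ = x := by rw [← hcol z₁ hz₁, ← hcol z₂ hz₂, h]
  rcases hy z₁ hz₁ with rfl | rfl <;> rcases hy z₂ hz₂ with rfl | rfl <;> simp_all

lemma exists_adj_inverseSeparatingColoring_ne (hx : x⁻¹ = x) {v : G} (hv : v ≠ 1)
    (hmax : ¬IsMaximalInvolution v) :
    ∃ w, w ≠ 1 ∧ (powerGraph G).Adj v w ∧
      inverseSeparatingColoring x w ≠ inverseSeparatingColoring x v := by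
  by_cases hvv : v = v⁻¹
  · obtain ⟨y, hvy, hyy⟩ :=
      exists_mem_zpowers_ne_inv_of_not_isMaximalInvolution (orderOf_eq_two_of_eq_inv hvv hv) hmax
    have hy1 : y ≠ 1 := by
      rintro rfl
      simp at hyy
    have hvy' : v ≠ y := fun h => hyy (by rw [← h, ← hvv])
    have hyx : y ≠ x := fun h => hyy (by rw [h, hx])
    have hadj : (powerGraph G).Adj v y := powerGraph_adj_of_mem_zpowers hvy' hvy
    have hadj' : (powerGraph G).Adj v y⁻¹ :=
      powerGraph_adj_of_mem_zpowers (fun h => hvy' (by rw [hvv, h, inv_inv]))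
        (zpowers_inv (g := y) ▸ hvy)
    have hcol := inverseSeparatingColoring_inv_ne hx hyy hyx
    by_cases hyv : inverseSeparatingColoring x y = inverseSeparatingColoring x v
    · exact ⟨y⁻¹, inv_ne_one.mpr hy1, hadj', hyv ▸ hcol⟩
    · exact ⟨y, hy1, hadj, hyv⟩
  · exact ⟨v⁻¹, inv_ne_one.mpr hv, powerGraph_adj_inv hvv,
      inverseSeparatingColoring_inv_ne hx hvv (fun h => hvv (by rw [h, hx]))⟩

end inverseSeparatingColoring

lemma exists_isRainbowColoring_powerGraph_fin_three {x₁ x₂ : G} (hx₁ : x₁⁻¹ = x₁)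
    (hall : ∀ y, IsMaximalInvolution y → y = x₁ ∨ y = x₂) :
    ∃ ζ : Sym2 G → Fin 3, IsRainbowColoring (powerGraph G) ζ := by
  classical
  let : LinearOrder G := linearOrderOfSTO WellOrderingRel
  exact exists_isRainbowColoring_fin_three (fun _ => powerGraph_adj_one_left)
    (inverseSeparatingColoring x₁) _ (inverseSeparatingColoring_injOn hx₁ hall)
    fun _ hv hvB => exists_adj_inverseSeparatingColoring_ne hx₁ hv hvB

end PowerGraph

theorem rc_powerGraph_eq_three_of_two_maximalInvolutions_general
    (G : Type*) [Group G]
    (h : Nat.card {x : G // IsMaximalInvolution x} = 2) :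
    rainbowConnection (powerGraph G) = 3 := by
  obtain ⟨⟨x₁, hx₁⟩, ⟨x₂, hx₂⟩, hne, huniv⟩ := Nat.card_eq_two_iff.mp h
  have hall : ∀ y, IsMaximalInvolution y → y = x₁ ∨ y = x₂ := fun y hy => by
    simpa using huniv.ge (Set.mem_univ ⟨y, hy⟩)
  refine rainbowConnection_eq_of_forall_le
    (exists_isRainbowColoring_powerGraph_fin_three (inv_eq_self_of_orderOf_eq_two hx₁.1) hall)
    fun _ _ => three_le_of_isRainbowColoring_powerGraph hx₁ hx₂ (Subtype.coe_injective.ne hne)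

theorem rc_powerGraph_eq_three_of_two_maximalInvolutions
    (G : Type*) [Group G] [Fintype G]
    (h : Nat.card {x : G // IsMaximalInvolution x} = 2) :
    rainbowConnection (powerGraph G) = 3 :=
  rc_powerGraph_eq_three_of_two_maximalInvolutions_general G h
end

section
/- For every odd positive integer n, the rainbow connection number of the power graph of the direct product Q_8 × ℤ_n of the quaternion group of order 8 with the cyclic group of order n equals 2. -/
open Subgroup QuaternionGroup

section RainbowColoring

variable {V : Type*}

def IsRainbowMidpoint {α : Type*} (Γ : SimpleGraph V) (ζ : Sym2 V → α) (u v w : V) : Prop :=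
  Γ.Adj u w ∧ Γ.Adj w v ∧ ζ s(u, w) ≠ ζ s(w, v)

variable {Γ : SimpleGraph V}

theorem isRainbowColoring_of_exists_midpoint {k : ℕ} (ζ : Sym2 V → Fin k)
    (h : ∀ u v, u ≠ v → ¬ Γ.Adj u v → ∃ w, IsRainbowMidpoint Γ ζ u v w) :
    IsRainbowColoring Γ ζ := by
  intro u v
  by_cases huv : u = v
  · subst huv
    exact ⟨.nil, .nil, by simp⟩
  by_cases hadj : Γ.Adj u v
  · exact ⟨.cons hadj .nil, by simp [huv], by simp⟩
  obtain ⟨w, huw, hwv, hζ⟩ := h u v huv hadj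
  refine ⟨.cons huw (.cons hwv .nil), ?_, by simpa using hζ⟩
  simp [huv, huw.ne, hwv.ne]

theorem two_le_rainbowConnection {k : ℕ} {ζ : Sym2 V → Fin k} (hζ : IsRainbowColoring Γ ζ)
    {u v : V} (huv : u ≠ v) (hadj : ¬ Γ.Adj u v) : 2 ≤ rainbowConnection Γ := by
  refine le_csInf ⟨k, ζ, hζ⟩ ?_
  rintro m ⟨ξ, hξ⟩
  obtain ⟨p, -, hnodup⟩ := hξ u v
  have hlen : 2 ≤ p.length := by
    by_contra! hlt
    interval_cases h : p.length
    · exact huv (SimpleGraph.Walk.eq_of_length_eq_zero h)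
    · exact hadj (SimpleGraph.Walk.adj_of_length_eq_one h)
  have hcard := hnodup.length_le_card
  simp only [List.length_map, SimpleGraph.Walk.length_edges, Fintype.card_fin] at hcard
  omega

theorem rainbowConnection_eq_two {ζ : Sym2 V → Fin 2} (hζ : IsRainbowColoring Γ ζ)
    {u v : V} (huv : u ≠ v) (hadj : ¬ Γ.Adj u v) : rainbowConnection Γ = 2 :=
  le_antisymm (Nat.sInf_le ⟨ζ, hζ⟩) (two_le_rainbowConnection hζ huv hadj)

end RainbowColoring

theorem Nat.exists_testBit_div_two_ne_of_odd {d d' n : ℕ} (hd : Odd d) (hd' : Odd d')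
    (hne : d ≠ d') (hdn : d ≤ n) (hdn' : d' ≤ n) :
    ∃ t, 2 ^ t < n ∧ (d / 2).testBit t ≠ (d' / 2).testBit t := by
  obtain ⟨t, ht⟩ := Nat.exists_testBit_ne_of_ne (x := d / 2) (y := d' / 2) (by
    obtain ⟨k, rfl⟩ := hd
    obtain ⟨k', rfl⟩ := hd'
    omega)
  refine ⟨t, ?_, ht⟩
  cases hbit : (d / 2).testBit t
  · have := Nat.ge_two_pow_of_testBit (by simpa [hbit] using ht.symm)
    omega
  · have := Nat.ge_two_pow_of_testBit hbit
    omega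

section Group

variable {G : Type*} [Group G]

theorem powerGraph_adj_one {x : G} (hx : x ≠ 1) : (powerGraph G).Adj x 1 :=
  ⟨hx, Or.inr (one_mem _)⟩

theorem one_lt_orderOf [Finite G] {x : G} (hx : x ≠ 1) : 1 < orderOf x := by
  have := orderOf_pos x
  have : orderOf x ≠ 1 := mt orderOf_eq_one_iff.mp hx
  omega

theorem orderOf_lt_of_mem_zpowers [Finite G] {x y w : G} (hx : x ∈ zpowers w)
    (hy : y ∈ zpowers w) (hyx : y ∉ zpowers x) : orderOf x < orderOf w := by
  refine (Nat.le_of_dvd (orderOf_pos w) (orderOf_dvd_of_mem_zpowers hx)).lt_of_ne fun h => hyx ?_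
  have : zpowers x = zpowers w :=
    eq_of_le_of_card_ge (zpowers_le.mpr hx) (by rw [Nat.card_zpowers, Nat.card_zpowers, h])
  rwa [this]

theorem mem_zpowers_iff_exists_fin [Finite G] {m : ℕ} [NeZero m] (hm : ∀ g : G, g ^ m = 1)
    {x y : G} :
    x ∈ zpowers y ↔ ∃ k : Fin m, y ^ (k : ℕ) = x := by
  refine ⟨fun h => ?_, fun ⟨k, hk⟩ => hk ▸ pow_mem (mem_zpowers y) _⟩
  obtain ⟨k, rfl⟩ := mem_powers_iff_mem_zpowers.mpr h
  refine ⟨⟨k % m, Nat.mod_lt _ (NeZero.pos m)⟩, ?_⟩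
  dsimp only
  conv_rhs => rw [← Nat.div_add_mod k m]
  rw [pow_add, pow_mul, hm, one_pow, one_mul]

theorem IsCyclic.mem_zpowers_of_orderOf_dvd {C : Type*} [CommGroup C] [IsCyclic C] [Finite C]
    {x y : C} (h : orderOf x ∣ orderOf y) : x ∈ zpowers y := by
  let K := (powMonoidHom (orderOf y) : C →* C).ker
  have hle : zpowers y ≤ K := zpowers_le.mpr (pow_orderOf_eq_one y)
  have hcard : Nat.card K ≤ Nat.card (zpowers y) := by
    rw [IsCyclic.card_powMonoidHom_ker, Nat.card_zpowers,
      Nat.gcd_eq_right (orderOf_dvd_natCard y)]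
  rw [eq_of_le_of_card_ge hle hcard]
  exact orderOf_dvd_iff_pow_eq_one.mp h

theorem mem_zpowers_prod_iff {A B : Type*} [Group A] [Group B] [Finite A] [Finite B]
    (hcop : (Nat.card A).Coprime (Nat.card B)) {x w : A × B} :
    x ∈ zpowers w ↔ x.1 ∈ zpowers w.1 ∧ x.2 ∈ zpowers w.2 := by
  constructor
  · rintro ⟨k, rfl⟩
    exact ⟨⟨k, rfl⟩, ⟨k, rfl⟩⟩
  rintro ⟨h₁, h₂⟩
  obtain ⟨s, hs⟩ := mem_powers_iff_mem_zpowers.mpr h₁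
  obtain ⟨t, ht⟩ := mem_powers_iff_mem_zpowers.mpr h₂
  have hcop' : (orderOf w.1).Coprime (orderOf w.2) :=
    (hcop.coprime_dvd_left (orderOf_dvd_natCard _)).coprime_dvd_right (orderOf_dvd_natCard _)
  obtain ⟨k, hk₁, hk₂⟩ := Nat.chineseRemainder hcop' s t
  refine mem_powers_iff_mem_zpowers.mp ⟨k, Prod.ext ?_ ?_⟩
  · rw [Prod.pow_fst, ← hs]
    exact pow_eq_pow_iff_modEq.mpr hk₁
  · rw [Prod.pow_snd, ← ht]
    exact pow_eq_pow_iff_modEq.mpr hk₂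

noncomputable def orderColoring {α : Type*} [Inhabited α] (c : G → G → α) : Sym2 G → α :=
  Sym2.lift ⟨fun x y => if orderOf x < orderOf y then c x y
    else if orderOf y < orderOf x then c y x else default, fun x y => by
      dsimp only
      split_ifs <;> first | rfl | omega⟩

theorem orderColoring_mk_of_lt {α : Type*} [Inhabited α] {c : G → G → α} {x y : G}
    (h : orderOf x < orderOf y) : orderColoring c s(x, y) = c x y := by
  simp [orderColoring, h]

theorem orderColoring_mk_of_gt {α : Type*} [Inhabited α] {c : G → G → α} {x y : G}
    (h : orderOf y < orderOf x) : orderColoring c s(x, y) = c y x := by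
  rw [Sym2.eq_swap, orderColoring_mk_of_lt h]

theorem orderOf_lt_of_sq_eq_one_of_sq_ne_one [Finite G] {x y : G} (hx : x ^ 2 = 1)
    (hy : y ^ 2 ≠ 1) : orderOf x < orderOf y := by
  have hx2 := orderOf_le_of_pow_eq_one two_pos hx
  by_contra! hle
  have hy2 : orderOf y ≤ 2 := hle.trans hx2
  have hy0 := orderOf_pos y
  exact hy (orderOf_dvd_iff_pow_eq_one.mp (by interval_cases orderOf y <;> norm_num))

end Group

local notation "Q₈" => QuaternionGroup 2

namespace QuaternionGroup

-- In `QuaternionGroup 2`, `a 2 = -1`; taking `i = a 1` and `j = xa 0` gives `-i = a 3`,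
-- `-j = xa 2` and `±k = xa 1, xa 3`.
theorem pow_four_eq_one : ∀ g : Q₈, g ^ 4 = 1 := by decide

theorem mem_zpowers_iff_exists_pow {x y : Q₈} : x ∈ zpowers y ↔ ∃ k : Fin 4, y ^ (k : ℕ) = x :=
  mem_zpowers_iff_exists_fin pow_four_eq_one

def oneEdgeColor (g : Q₈) : Bool := decide (g = 1 ∨ g = xa 1 ∨ g = xa 3)

def negOneEdgeColor (g : Q₈) : Bool := decide (g = xa 0 ∨ g = xa 2)

theorem a_two_mem_zpowers {g : Q₈} (hg : g ≠ 1) : a 2 ∈ zpowers g := by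
  revert g
  simp only [mem_zpowers_iff_exists_pow]
  decide

theorem ne_one_of_oneEdgeColor_a_two_eq {g : Q₈} (hg : oneEdgeColor (a 2) = oneEdgeColor g) :
    g ≠ 1 := by
  revert g
  decide

theorem a_one_notMem_zpowers_xa_zero : a 1 ∉ zpowers (xa 0 : Q₈) := by
  simp only [mem_zpowers_iff_exists_pow]
  decide

theorem xa_zero_notMem_zpowers_a_one : xa 0 ∉ zpowers (a 1 : Q₈) := by
  simp only [mem_zpowers_iff_exists_pow]
  decide

theorem oneEdgeColor_eq_cases (g h : Q₈) (hgh : oneEdgeColor g = oneEdgeColor h) :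
    (g ^ 2 ≠ 1 ∧ h ^ 2 ≠ 1 ∧ negOneEdgeColor g ≠ negOneEdgeColor h) ∨
      ((g ∈ zpowers h ∨ h ∈ zpowers g) ∧ ∃ q : Q₈, g ∈ zpowers q ∧ h ∈ zpowers q) := by
  revert g h
  simp only [mem_zpowers_iff_exists_pow]
  decide

end QuaternionGroup

section QuaternionTimesCyclic

variable {n : ℕ}

def bitHub (q : Q₈) (t : ℕ) : Q₈ × Multiplicative (ZMod n) :=
  (q, Multiplicative.ofAdd ((2 ^ t : ℕ) : ZMod n))

-- For odd `n`, orders in `ZMod n` are odd, so halving them is injective, and a bit where two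
-- halved orders differ sits at a position `t` with `2 ^ t < n`, where the hub `(q, 2 ^ t)` exists.
noncomputable def upEdgeColor (x y : Q₈ × Multiplicative (ZMod n)) : Bool :=
  if x = 1 then oneEdgeColor y.1
  else if x = (a 2, 1) then negOneEdgeColor y.1
  else (orderOf x.2 / 2).testBit (Nat.log 2 (Multiplicative.toAdd y.2).val)

theorem upEdgeColor_bitHub {u : Q₈ × Multiplicative (ZMod n)} (hu : u ≠ 1)
    (hu' : u ≠ (a 2, 1)) (q : Q₈) {t : ℕ} (ht : 2 ^ t < n) :
    upEdgeColor u (bitHub q t) = (orderOf u.2 / 2).testBit t := by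
  simp only [upEdgeColor, bitHub, if_neg hu, if_neg hu', toAdd_ofAdd, ZMod.val_natCast_of_lt ht,
    Nat.log_pow one_lt_two]

variable [NeZero n]

theorem orderOf_multiplicative_zmod_dvd (c : Multiplicative (ZMod n)) : orderOf c ∣ n := by
  simpa using orderOf_dvd_natCard c

theorem mem_zpowers_iff_of_odd (hodd : Odd n) {x w : Q₈ × Multiplicative (ZMod n)} :
    x ∈ zpowers w ↔ x.1 ∈ zpowers w.1 ∧ x.2 ∈ zpowers w.2 := by
  refine mem_zpowers_prod_iff ?_
  rw [Nat.card_eq_fintype_card, QuaternionGroup.card]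
  simpa using (Nat.coprime_two_left.mpr hodd).pow_left 3

theorem orderOf_bitHub_snd (hodd : Odd n) (q : Q₈) (t : ℕ) :
    orderOf (bitHub (n := n) q t).2 = n := by
  rw [bitHub, orderOf_ofAdd_eq_addOrderOf, ZMod.addOrderOf_coe _ (NeZero.ne n),
    ((Nat.coprime_two_right.mpr hodd).pow_right t).gcd_eq_one, Nat.div_one]

theorem mem_zpowers_bitHub (hodd : Odd n) {x : Q₈ × Multiplicative (ZMod n)} {q : Q₈}
    {t : ℕ} : x ∈ zpowers (bitHub q t) ↔ x.1 ∈ zpowers q := by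
  have hsnd : x.2 ∈ zpowers (bitHub q t).2 := IsCyclic.mem_zpowers_of_orderOf_dvd
    (by rw [orderOf_bitHub_snd hodd]; exact orderOf_multiplicative_zmod_dvd x.2)
  rw [mem_zpowers_iff_of_odd hodd]
  exact and_iff_left hsnd

theorem powerGraph_adj_a_two (hodd : Odd n) {v : Q₈ × Multiplicative (ZMod n)} (hv : v.1 ≠ 1)
    (hne : (a 2, 1) ≠ v) : (powerGraph _).Adj (a 2, 1) v :=
  ⟨hne, Or.inl ((mem_zpowers_iff_of_odd hodd).mpr ⟨a_two_mem_zpowers hv, one_mem _⟩)⟩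

theorem not_adj_a_one_xa_zero (hodd : Odd n) :
    ¬ (powerGraph (Q₈ × Multiplicative (ZMod n))).Adj (a 1, 1) (xa 0, 1) := by
  rintro ⟨-, h | h⟩ <;> rw [mem_zpowers_iff_of_odd hodd] at h
  · exact a_one_notMem_zpowers_xa_zero h.1
  · exact xa_zero_notMem_zpowers_a_one h.1

variable {u v : Q₈ × Multiplicative (ZMod n)}

theorem isRainbowMidpoint_one (hu : u ≠ 1) (hv : v ≠ 1)
    (h : oneEdgeColor u.1 ≠ oneEdgeColor v.1) :
    IsRainbowMidpoint (powerGraph _) (orderColoring upEdgeColor) u v 1 := by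
  refine ⟨powerGraph_adj_one hu, (powerGraph_adj_one hv).symm, ?_⟩
  rw [orderColoring_mk_of_gt (by simpa using one_lt_orderOf hu),
    orderColoring_mk_of_lt (by simpa using one_lt_orderOf hv)]
  simpa [upEdgeColor] using h

theorem isRainbowMidpoint_a_two (hodd : Odd n) (hu : u.1 ^ 2 ≠ 1) (hv : v.1 ^ 2 ≠ 1)
    (h : negOneEdgeColor u.1 ≠ negOneEdgeColor v.1) :
    IsRainbowMidpoint (powerGraph _) (orderColoring upEdgeColor) u v (a 2, 1) := by
  have hsq : ((a 2, 1) : Q₈ × Multiplicative (ZMod n)) ^ 2 = 1 :=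
    Prod.ext (show (a 2 : Q₈) ^ 2 = 1 by decide) (one_pow _)
  have hlt : ∀ {x : Q₈ × Multiplicative (ZMod n)}, x.1 ^ 2 ≠ 1 →
      orderOf ((a 2, 1) : Q₈ × Multiplicative (ZMod n)) < orderOf x :=
    fun hx => orderOf_lt_of_sq_eq_one_of_sq_ne_one hsq fun h =>
      hx (by simpa using congrArg Prod.fst h)
  have hadj : ∀ {x : Q₈ × Multiplicative (ZMod n)}, x.1 ^ 2 ≠ 1 → (powerGraph _).Adj (a 2, 1) x :=
    fun hx => powerGraph_adj_a_two hodd (fun h => hx (by simp [h]))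
      (fun h => (hlt hx).ne (congrArg orderOf h))
  refine ⟨(hadj hu).symm, hadj hv, ?_⟩
  rw [orderColoring_mk_of_gt (hlt hu), orderColoring_mk_of_lt (hlt hv)]
  have : ((a 2, 1) : Q₈ × Multiplicative (ZMod n)) ≠ 1 :=
    fun h => absurd (Prod.mk_eq_one.mp h).1 (by decide)
  simpa [upEdgeColor, this] using h

theorem orderOf_snd_ne_of_not_adj (hodd : Odd n) (huv : u ≠ v)
    (hadj : ¬ (powerGraph _).Adj u v) (hchain : u.1 ∈ zpowers v.1 ∨ v.1 ∈ zpowers u.1) :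
    orderOf u.2 ≠ orderOf v.2 := by
  intro h
  have h₁ : u.2 ∈ zpowers v.2 := IsCyclic.mem_zpowers_of_orderOf_dvd h.dvd
  have h₂ : v.2 ∈ zpowers u.2 := IsCyclic.mem_zpowers_of_orderOf_dvd h.symm.dvd
  rcases hchain with h | h
  · exact hadj ⟨huv, Or.inl ((mem_zpowers_iff_of_odd hodd).mpr ⟨h, h₁⟩)⟩
  · exact hadj ⟨huv, Or.inr ((mem_zpowers_iff_of_odd hodd).mpr ⟨h, h₂⟩)⟩

theorem isRainbowMidpoint_bitHub (hodd : Odd n) (huv : u ≠ v) (hadj : ¬ (powerGraph _).Adj u v)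
    (hu : u ≠ 1) (hv : v ≠ 1) (hu' : u ≠ (a 2, 1)) (hv' : v ≠ (a 2, 1)) {q : Q₈}
    (hqu : u.1 ∈ zpowers q) (hqv : v.1 ∈ zpowers q) {t : ℕ} (ht : 2 ^ t < n)
    (hbit : (orderOf u.2 / 2).testBit t ≠ (orderOf v.2 / 2).testBit t) :
    IsRainbowMidpoint (powerGraph _) (orderColoring upEdgeColor) u v (bitHub q t) := by
  have hmu : u ∈ zpowers (bitHub q t) := (mem_zpowers_bitHub hodd).mpr hqu
  have hmv : v ∈ zpowers (bitHub q t) := (mem_zpowers_bitHub hodd).mpr hqv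
  have hltu : orderOf u < orderOf (bitHub q t) :=
    orderOf_lt_of_mem_zpowers hmu hmv fun h => hadj ⟨huv, Or.inr h⟩
  have hltv : orderOf v < orderOf (bitHub q t) :=
    orderOf_lt_of_mem_zpowers hmv hmu fun h => hadj ⟨huv, Or.inl h⟩
  refine ⟨⟨fun h => hltu.ne (congrArg orderOf h), Or.inl hmu⟩,
    ⟨fun h => hltv.ne (congrArg orderOf h).symm, Or.inr hmv⟩, ?_⟩
  rwa [orderColoring_mk_of_lt hltu, orderColoring_mk_of_gt hltv, upEdgeColor_bitHub hu hu' q ht,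
    upEdgeColor_bitHub hv hv' q ht]

theorem exists_isRainbowMidpoint (hodd : Odd n) (huv : u ≠ v) (hadj : ¬ (powerGraph _).Adj u v) :
    ∃ w, IsRainbowMidpoint (powerGraph _) (orderColoring upEdgeColor) u v w := by
  have hu : u ≠ 1 := by
    rintro rfl
    exact hadj (powerGraph_adj_one huv.symm).symm
  have hv : v ≠ 1 := by
    rintro rfl
    exact hadj (powerGraph_adj_one huv)
  by_cases he : oneEdgeColor u.1 = oneEdgeColor v.1
  swap
  · exact ⟨1, isRainbowMidpoint_one hu hv he⟩
  rcases oneEdgeColor_eq_cases u.1 v.1 he with ⟨hu2, hv2, hz⟩ | ⟨hchain, q, hqu, hqv⟩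
  · exact ⟨_, isRainbowMidpoint_a_two hodd hu2 hv2 hz⟩
  have hu' : u ≠ (a 2, 1) := by
    rintro rfl
    exact hadj (powerGraph_adj_a_two hodd (ne_one_of_oneEdgeColor_a_two_eq he) huv)
  have hv' : v ≠ (a 2, 1) := by
    rintro rfl
    exact hadj (powerGraph_adj_a_two hodd (ne_one_of_oneEdgeColor_a_two_eq he.symm) huv.symm).symm
  have hord (c : Multiplicative (ZMod n)) : Odd (orderOf c) :=
    hodd.of_dvd_nat (orderOf_multiplicative_zmod_dvd c)
  obtain ⟨t, ht, hbit⟩ := Nat.exists_testBit_div_two_ne_of_odd (hord u.2) (hord v.2)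
    (orderOf_snd_ne_of_not_adj hodd huv hadj hchain)
    (Nat.le_of_dvd (NeZero.pos n) (orderOf_multiplicative_zmod_dvd _))
    (Nat.le_of_dvd (NeZero.pos n) (orderOf_multiplicative_zmod_dvd _))
  exact ⟨bitHub q t, isRainbowMidpoint_bitHub hodd huv hadj hu hv hu' hv' hqu hqv ht hbit⟩

end QuaternionTimesCyclic

theorem rc_powerGraph_quaternion_mul_cyclic_odd_general (n : ℕ) (hodd : Odd n) :
    rainbowConnection (powerGraph (QuaternionGroup 2 × Multiplicative (ZMod n))) = 2 := by
  have : NeZero n := ⟨hodd.pos.ne'⟩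
  refine rainbowConnection_eq_two (ζ := finTwoEquiv.symm ∘ orderColoring upEdgeColor) ?_
    (by simp : ((a 1, 1) : Q₈ × Multiplicative (ZMod n)) ≠ (xa 0, 1)) (not_adj_a_one_xa_zero hodd)
  refine isRainbowColoring_of_exists_midpoint _ fun u v huv hadj => ?_
  obtain ⟨w, huw, hwv, hne⟩ := exists_isRainbowMidpoint hodd huv hadj
  exact ⟨w, huw, hwv, finTwoEquiv.symm.injective.ne hne⟩

theorem rc_powerGraph_quaternion_mul_cyclic_odd (n : ℕ) (hpos : 0 < n) (hodd : Odd n) :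
    rainbowConnection (powerGraph (QuaternionGroup 2 × Multiplicative (ZMod n))) = 2 :=
  rc_powerGraph_quaternion_mul_cyclic_odd_general n hodd
end
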